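/- For every integer s ≥ 1, ζ(2s) = -π · [(d^(2s-1)/dz^(2s-1)) cot(πz)]|_{z=1/4} / (2^(2s) · (2^(2s)-1) · Γ(2s)). -/

import Mathlib

open Real

/-!
Differentiating the Mittag-Leffler expansion `π cot(πx) = ∑_{n ∈ ℤ} 1/(x + n)` term by term gives
`dᵏ/dxᵏ cot(πx) = (-1)ᵏ k! / π · ∑_{n ∈ ℤ} (x + n)^{-(k+1)}`. At `x = 1/4` and `k + 1 = 2s` even,
the terms `n = 0` and `n = ±(j + 1)` become `4^{2s}` times `1`, `(4j + 3)^{-2s}`, `(4j + 5)^{-2s}`, so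
the sum is `4^{2s} ∑_{m odd} m^{-2s} = 4^{2s} (1 - 2^{-2s}) ζ(2s)`; finally `Γ(2s) = (2s - 1)!`.
-/

open Filter Set
open scoped Nat Topology

noncomputable def cotPair (k n : ℕ) (x : ℝ) : ℝ :=
  ((x - (n + 1)) ^ (k + 1))⁻¹ + ((x + (n + 1)) ^ (k + 1))⁻¹

/-- `∑_{n ∈ ℤ} (x + n)^{-(k+1)}`, with the terms `±n` grouped so that it also converges for `k = 0`. -/
noncomputable def cotSeries (k : ℕ) (x : ℝ) : ℝ :=
  (x ^ (k + 1))⁻¹ + ∑' n, cotPair k n x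

lemma ofReal_mem_integerComplement {x : ℝ} (hx : ∀ m : ℤ, (m : ℝ) ≠ x) :
    (x : ℂ) ∈ Complex.integerComplement :=
  fun ⟨m, hm⟩ => hx m (by exact_mod_cast hm)

lemma pi_mul_cot_eq_cotSeries_zero {x : ℝ} (hx : ∀ m : ℤ, (m : ℝ) ≠ x) :
    π * cot (π * x) = cotSeries 0 x := by
  have hxC := ofReal_mem_integerComplement hx
  apply Complex.ofReal_injective
  push_cast [cotSeries, cotPair, Complex.ofReal_tsum, Complex.ofReal_cot]
  simp only [pow_one, inv_eq_one_div]
  rw [← sub_eq_iff_eq_add', cot_series_rep' hxC]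

lemma summable_cotPair_zero {x : ℝ} (hx : ∀ m : ℤ, (m : ℝ) ≠ x) :
    Summable (cotPair 0 · x) := by
  have hxC := ofReal_mem_integerComplement hx
  rw [← Complex.summable_ofReal]
  convert summable_cotTerm hxC using 2 with n
  push_cast [cotPair, cotTerm]
  simp [one_div]

lemma norm_inv_pow_add_le {y a : ℝ} (hy : |y| < 1 / 2) (ha : 1 ≤ |a|) {j : ℕ} (hj : 2 ≤ j) :
    ‖((y + a) ^ j)⁻¹‖ ≤ 2 ^ j * (a ^ 2)⁻¹ := by
  have ha0 : 0 < |a| := by linarith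
  have hya : |a| / 2 ≤ |y + a| := by
    have := abs_sub_abs_le_abs_add a y
    rw [add_comm a y] at this
    linarith
  calc ‖((y + a) ^ j)⁻¹‖ = (|y + a| ^ j)⁻¹ := by simp
    _ ≤ ((|a| / 2) ^ j)⁻¹ := by gcongr
    _ = 2 ^ j * (|a| ^ j)⁻¹ := by rw [div_pow, inv_div, div_eq_mul_inv]
    _ ≤ 2 ^ j * (|a| ^ 2)⁻¹ := by gcongr
    _ = 2 ^ j * (a ^ 2)⁻¹ := by rw [sq_abs]

lemma norm_cotPair_succ_le (k n : ℕ) {y : ℝ} (hy : |y| < 1 / 2) :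
    ‖cotPair (k + 1) n y‖ ≤ 2 ^ (k + 3) * (((n : ℝ) + 1) ^ 2)⁻¹ := by
  have hn : 1 ≤ |(n : ℝ) + 1| := by rw [abs_of_pos (by positivity)]; simp
  have hsub := norm_inv_pow_add_le hy (a := -((n : ℝ) + 1)) (by rwa [abs_neg]) (j := k + 2)
    (by omega)
  have hadd := norm_inv_pow_add_le hy hn (j := k + 2) (by omega)
  rw [neg_sq, ← sub_eq_add_neg] at hsub
  calc ‖cotPair (k + 1) n y‖ ≤ _ := norm_add_le _ _
    _ ≤ _ := add_le_add hsub hadd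
    _ = _ := by ring

lemma summable_inv_succ_sq_mul (c : ℝ) : Summable (fun n : ℕ => c * (((n : ℝ) + 1) ^ 2)⁻¹) := by
  refine .mul_left c ?_
  exact_mod_cast (summable_nat_add_iff 1).mpr (Real.summable_nat_pow_inv.mpr one_lt_two)

lemma summable_cotPair_succ (k : ℕ) {y : ℝ} (hy : |y| < 1 / 2) :
    Summable (cotPair (k + 1) · y) :=
  .of_norm_bounded (summable_inv_succ_sq_mul _) (fun n => norm_cotPair_succ_le k n hy)

lemma hasDerivAt_inv_pow_sub (k : ℕ) {a y : ℝ} (h : y ≠ a) :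
    HasDerivAt (fun z : ℝ => ((z - a) ^ (k + 1))⁻¹) (-(k + 1) * ((y - a) ^ (k + 2))⁻¹) y := by
  have hya := sub_ne_zero.mpr h
  have hpow : HasDerivAt (fun z => (z - a) ^ (k + 1)) ((k + 1) * (y - a) ^ k) y := by
    simpa using ((hasDerivAt_id y).sub_const a).fun_pow (k + 1)
  refine (hpow.inv (pow_ne_zero _ hya)).congr_deriv ?_
  field_simp
  ring

lemma hasDerivAt_cotPair (k n : ℕ) {y : ℝ} (h₁ : y ≠ n + 1) (h₂ : y ≠ -(n + 1)) :
    HasDerivAt (cotPair k n) (-(k + 1) * cotPair (k + 1) n y) y := by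
  have hsub := hasDerivAt_inv_pow_sub k h₁
  have hadd := hasDerivAt_inv_pow_sub k h₂
  simp only [sub_neg_eq_add] at hadd
  exact (hsub.add hadd).congr_deriv (by simp only [cotPair]; ring)

lemma not_intCast_of_mem_Ioo {x : ℝ} (hx : x ∈ Ioo 0 1) (m : ℤ) : (m : ℝ) ≠ x := by
  rintro rfl
  obtain ⟨h0, h1⟩ := hx
  norm_cast at h0 h1
  omega

lemma hasDerivAt_tsum_cotPair (k : ℕ) {y : ℝ} (hy : y ∈ Ioo 0 (1 / 2)) :
    HasDerivAt (fun z => ∑' n, cotPair k n z) (-(k + 1) * ∑' n, cotPair (k + 1) n y) y := by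
  have hy' : y ∈ Ioo (-(1 / 2) : ℝ) (1 / 2) := ⟨by linarith [hy.1], hy.2⟩
  rw [← tsum_mul_left]
  refine hasDerivAt_tsum_of_isPreconnected (summable_inv_succ_sq_mul ((k + 1) * 2 ^ (k + 3)))
    isOpen_Ioo isPreconnected_Ioo (fun n z hz => hasDerivAt_cotPair k n ?_ ?_)
    (fun n z hz => ?_) hy' ?_ hy'
  · exact (show z < n + 1 by linarith [hz.2, n.cast_nonneg (α := ℝ)]).ne
  · exact (show -(n + 1 : ℝ) < z by linarith [hz.1, n.cast_nonneg (α := ℝ)]).ne'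
  · rw [norm_mul, mul_assoc, norm_neg, Real.norm_of_nonneg (by positivity)]
    gcongr
    exact norm_cotPair_succ_le k n (abs_lt.mpr hz)
  · rcases k with _ | k
    · exact summable_cotPair_zero (not_intCast_of_mem_Ioo ⟨hy.1, by linarith [hy.2]⟩)
    · exact summable_cotPair_succ k (abs_lt.mpr hy')

lemma hasDerivAt_cotSeries (k : ℕ) {x : ℝ} (hx : x ∈ Ioo 0 (1 / 2)) :
    HasDerivAt (cotSeries k) (-(k + 1) * cotSeries (k + 1) x) x := by
  have hlead := hasDerivAt_inv_pow_sub k hx.1.ne'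
  simp only [sub_zero] at hlead
  exact (hlead.add (hasDerivAt_tsum_cotPair k hx)).congr_deriv (by simp only [cotSeries]; ring)

lemma iteratedDeriv_cot_pi_mul (k : ℕ) {x : ℝ} (hx : x ∈ Ioo 0 (1 / 2)) :
    iteratedDeriv k (fun z => cot (π * z)) x = (-1) ^ k * k ! / π * cotSeries k x := by
  induction k generalizing x with
  | zero =>
    have hx' : x ∈ Ioo (0 : ℝ) 1 := ⟨hx.1, by linarith [hx.2]⟩
    rw [iteratedDeriv_zero, ← pi_mul_cot_eq_cotSeries_zero (not_intCast_of_mem_Ioo hx')]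
    simp [Real.pi_ne_zero]
  | succ k ih =>
    have hloc : iteratedDeriv k (fun z => cot (π * z)) =ᶠ[𝓝 x]
        fun y => (-1) ^ k * k ! / π * cotSeries k y :=
      eventually_of_mem (Ioo_mem_nhds hx.1 hx.2) fun y hy => ih hy
    rw [iteratedDeriv_succ, hloc.deriv_eq, ((hasDerivAt_cotSeries k hx).const_mul _).deriv]
    push_cast [Nat.factorial_succ, pow_succ]
    ring

lemma tsum_eq_zero_add_tsum_pairs {G : Type*} [AddCommGroup G] [UniformSpace G]
    [IsUniformAddGroup G] [CompleteSpace G] [T2Space G] {f : ℕ → G} (hf : Summable f) :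
    ∑' m, f m = f 0 + ∑' n, (f (2 * n + 1) + f (2 * n + 2)) := by
  have hodd : Summable fun n => f (2 * n + 1) :=
    hf.comp_injective (i := fun n => 2 * n + 1) fun a b h => by dsimp only at h; omega
  have heven : Summable fun n => f (2 * n + 2) :=
    hf.comp_injective (i := fun n => 2 * n + 2) fun a b h => by dsimp only at h; omega
  rw [hf.tsum_eq_zero_add, hodd.tsum_add heven,
    ← tsum_even_add_odd (f := fun m => f (m + 1)) hodd heven]

lemma summable_inv_odd_pow {j : ℕ} (hj : 1 < j) :
    Summable fun m : ℕ => ((2 * m + 1 : ℝ) ^ j)⁻¹ := by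
  have := (Real.summable_nat_pow_inv.mpr hj).comp_injective
    (i := fun m => 2 * m + 1) fun a b h => by dsimp only at h; omega
  exact_mod_cast this

lemma tsum_inv_odd_pow {j : ℕ} (hj : 1 < j) :
    ∑' m : ℕ, ((2 * m + 1 : ℝ) ^ j)⁻¹ = (1 - (2 ^ j)⁻¹) * ∑' n : ℕ, ((n : ℝ) ^ j)⁻¹ := by
  have hZ := Real.summable_nat_pow_inv.mpr hj
  have heven : ∀ n : ℕ, (((2 * n : ℕ) : ℝ) ^ j)⁻¹ = (2 ^ j)⁻¹ * ((n : ℝ) ^ j)⁻¹ := fun n => by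
    push_cast
    rw [mul_pow, mul_inv]
  have hsplit := tsum_even_add_odd (f := fun n : ℕ => ((n : ℝ) ^ j)⁻¹)
    (by simpa only [heven] using hZ.mul_left _) (by exact_mod_cast summable_inv_odd_pow hj)
  simp only [heven, tsum_mul_left] at hsplit
  push_cast at hsplit
  linarith

lemma cotSeries_quarter {k : ℕ} (hk : Even (k + 1)) :
    cotSeries k (1 / 4) = 4 ^ (k + 1) * ∑' m : ℕ, ((2 * m + 1 : ℝ) ^ (k + 1))⁻¹ := by
  have hk1 : 1 < k + 1 := by obtain ⟨r, hr⟩ := hk; omega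
  rw [tsum_eq_zero_add_tsum_pairs (summable_inv_odd_pow hk1), mul_add, ← tsum_mul_left]
  refine congrArg₂ (· + ·) (by simp) (tsum_congr fun n => ?_)
  have h₁ : (1 / 4 : ℝ) - (n + 1) = -((2 * (2 * n + 1 : ℕ) + 1) / 4) := by push_cast; ring
  have h₂ : (1 / 4 : ℝ) + (n + 1) = (2 * (2 * n + 2 : ℕ) + 1) / 4 := by push_cast; ring
  rw [cotPair, h₁, h₂, hk.neg_pow, div_pow, div_pow, inv_div, inv_div]
  push_cast
  ring

lemma riemannZeta_natCast_eq_tsum {j : ℕ} (hj : 1 < j) :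
    riemannZeta j = ((∑' n : ℕ, ((n : ℝ) ^ j)⁻¹ : ℝ) : ℂ) := by
  rw [zeta_nat_eq_tsum_of_gt_one hj, Complex.ofReal_tsum]
  push_cast
  simp only [one_div]

theorem zeta_even_eq_cot_deriv (s : ℕ) (hs : 1 ≤ s) :
    riemannZeta (2 * s) =
      ((-π * iteratedDeriv (2 * s - 1) (fun z : ℝ => Real.cot (π * z)) (1/4) /
        (2 ^ (2 * s) * (2 ^ (2 * s) - 1) * Real.Gamma (2 * s)) : ℝ) : ℂ) := by
  have hk : 2 * s - 1 + 1 = 2 * s := by omega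
  have hderiv : iteratedDeriv (2 * s - 1) (fun z : ℝ => cot (π * z)) (1 / 4) =
      -((2 * s - 1)! / π) *
        (4 ^ (2 * s) * (1 - (2 ^ (2 * s))⁻¹) * ∑' n : ℕ, ((n : ℝ) ^ (2 * s))⁻¹) := by
    rw [iteratedDeriv_cot_pi_mul _ (by norm_num),
      cotSeries_quarter (by rw [hk]; exact even_two_mul s), hk, tsum_inv_odd_pow (by omega),
      (show Odd (2 * s - 1) from ⟨s - 1, by omega⟩).neg_one_pow]
    ring
  have hGamma : Gamma (2 * s) = (2 * s - 1)! := by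
    rw [← Gamma_nat_eq_factorial]
    push_cast [Nat.cast_sub (by omega : 1 ≤ 2 * s)]
    ring_nf
  have hpow : (2 : ℝ) ^ (2 * s) - 1 ≠ 0 :=
    sub_ne_zero.mpr (one_lt_pow₀ one_lt_two (show 2 * s ≠ 0 by omega)).ne'
  rw [show (2 : ℂ) * s = (2 * s : ℕ) by push_cast; ring, riemannZeta_natCast_eq_tsum (by omega),
    hderiv, hGamma]
  congr 1
  rw [show (4 : ℝ) = 2 * 2 by norm_num, mul_pow]
  field_simp
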